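/- arXiv:2312.16210 — 4 statements merged into one kernel-verified Lean document; each statement's English description precedes it below -/
import Mathlib

section
/- Let F₁, …, F_n be n generic homogeneous polynomials in the n variables x₁, …, x_n of positive total degrees d₁, …, d_n, with coefficient indeterminate set A, and let R ∈ ℤ[A] be a generator of the (principal) ideal of inertia forms for F₁, …, F_n. Let K be a field and let φ : ℤ[A] → K be a ring homomorphism (a specialization of the coefficients in K). Then φ(R) = 0 if and only if the system φ(F₁) = 0, …, φ(F_n) = 0 has a non-trivial zero (a common zero with not all coordinates zero) in the algebraic closure of K. -/
open MvPolynomial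

/-- The index set `A` of generic coefficients for `r` generic homogeneous polynomials
of degrees `d 0, …, d (r-1)` in `n` variables: one indeterminate for each pair of an
index `i` and a monomial in `x₁, …, x_n` of total degree `d i`. -/
def CoeffIdx (n r : ℕ) (d : Fin r → ℕ) : Type :=
  Σ i : Fin r, {m : Fin n →₀ ℕ // m ∈ Finset.finsuppAntidiag (Finset.univ : Finset (Fin n)) (d i)}

/-- The `i`-th generic homogeneous polynomial `F i` of total degree `d i` in the
variables `x₁, …, x_n`: every possible coefficient is a distinct indeterminate. -/
noncomputable def genericHom (n r : ℕ) (d : Fin r → ℕ) (i : Fin r) :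
    MvPolynomial (Fin n) (MvPolynomial (CoeffIdx n r d) ℤ) :=
  ∑ m ∈ (Finset.finsuppAntidiag (Finset.univ : Finset (Fin n)) (d i)).attach,
    monomial m.1 (X (⟨i, m⟩ : CoeffIdx n r d))

/-- `T ∈ ℤ[A]` is an inertia form for the generic `F 0, …, F (r-1)` if
`x_i ^ τ * T ∈ (F 0, …, F (r-1))` for a suitable variable `x_i` and exponent `τ`. -/
def IsInertiaForm (n r : ℕ) (d : Fin r → ℕ) (T : MvPolynomial (CoeffIdx n r d) ℤ) : Prop :=
  ∃ (i : Fin n) (τ : ℕ),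
    (X i : MvPolynomial (Fin n) (MvPolynomial (CoeffIdx n r d) ℤ)) ^ τ * C T ∈
      Ideal.span (Set.range (genericHom n r d))

/-!
Both directions rest on the inertia forms being the principal ideal `(R)`.

If `x ≠ 0` is a common zero with `x_j ≠ 0`, the symmetry `x_i ↔ x_j` of the generic system
carries `R` to an inertia form for `x_j`, i.e. to a multiple of `R`; since the symmetry is an
involution, `R` is itself a multiple of that form, so `x_j ^ τ * R ∈ (F)` and evaluating at `x`
gives `φ(R) = 0`.

If there is no nontrivial zero, the Nullstellensatz puts a power of every `x_i`, hence every
monomial of some degree `δ`, into the specialized ideal. So after specialization the coefficient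
vectors of the multiples `x^m' * F_k` of degree `δ` span, and some square matrix `M` of them has
`φ(det M) ≠ 0`. Cramer's rule gives `x_i ^ δ * det M ∈ (F)`: `det M` is an inertia form, so
`R ∣ det M` and `φ(R) ≠ 0`.
-/

theorem Finset.mem_finsuppAntidiag_univ {σ : Type*} [Fintype σ] [DecidableEq σ] {m : σ →₀ ℕ}
    {δ : ℕ} :
    m ∈ finsuppAntidiag univ δ ↔ m.degree = δ := by
  simp [mem_finsuppAntidiag, Finsupp.degree_eq_sum]

theorem Finsupp.degree_equivMapDomain {σ τ : Type*} (π : σ ≃ τ) (m : σ →₀ ℕ) :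
    (equivMapDomain π m).degree = m.degree := by
  rw [equivMapDomain_eq_mapDomain, degree_mapDomain]

theorem Matrix.exists_det_ne_zero_of_span_eq_top {K V ι : Type*} [Field K] [Fintype V]
    [DecidableEq V] {w : ι → V → K} (hw : Submodule.span K (Set.range w) = ⊤) :
    ∃ u : V → ι, (Matrix.of fun m q => w (u q) m).det ≠ 0 := by
  obtain ⟨κ, a, -, hspan, hli⟩ := exists_linearIndependent' K w
  let B := Module.Basis.mk hli (by rw [hspan, hw])
  let e : κ ≃ V := B.indexEquiv (Pi.basisFun K V)
  refine ⟨a ∘ e.symm, fun hdet => ?_⟩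
  have hcols : LinearIndependent K (Matrix.of fun m q => w ((a ∘ e.symm) q) m).col :=
    hli.comp e.symm e.symm.injective
  rw [Matrix.linearIndependent_cols_iff_isUnit, Matrix.isUnit_iff_isUnit_det, hdet] at hcols
  exact not_isUnit_zero hcols

namespace MvPolynomial

variable {σ R : Type*}

theorem C_det_mul_monomial_mem [DecidableEq σ] [CommRing R] {S : Finset (σ →₀ ℕ)}
    {I : Ideal (MvPolynomial σ R)}
    (g : S → MvPolynomial σ R) (hgI : ∀ q, g q ∈ I) (hgS : ∀ q, (g q).support ⊆ S) (e : S) :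
    C (Matrix.of fun m q : S => coeff m.1 (g q)).det * monomial e.1 1 ∈ I := by
  set M := Matrix.of fun m q : S => coeff m.1 (g q)
  -- Cramer's rule: the `e`-th column of `M * adj M = det M • 1`.
  have hcramer : C M.det * monomial e.1 1 = ∑ q, C (M.adjugate q e) * g q := by
    ext m
    simp only [coeff_C_mul, coeff_monomial, coeff_sum]
    by_cases hm : m ∈ S
    · have h : ∑ q, coeff m (g q) * M.adjugate q e = M.det * if m = e then 1 else 0 := by
        simpa [Matrix.mul_apply, Matrix.one_apply, Subtype.ext_iff, M] using
          congrFun (congrFun M.mul_adjugate ⟨m, hm⟩) e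
      simp only [mul_comm (M.adjugate _ e), h, eq_comm (a := e.1), mul_ite, mul_one, mul_zero]
    · have hz : ∀ q, coeff m (g q) = 0 := fun q => notMem_support_iff.mp fun h => hm (hgS q h)
      simp [hz, show e.1 ≠ m from fun h => hm (h ▸ e.2)]
  rw [hcramer]
  exact Ideal.sum_mem _ fun q _ => Ideal.mul_mem_left _ _ (hgI q)

theorem exists_X_pow_mem_of_zeroLocus_subset [Finite σ] {L : Type*} [Field L] [IsAlgClosed L]
    {J : Ideal (MvPolynomial σ L)} (hJ : zeroLocus L J ⊆ {0}) (i : σ) : ∃ N, X i ^ N ∈ J := by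
  change X i ∈ J.radical
  rw [← vanishingIdeal_zeroLocus_eq_radical (K := L)]
  intro x hx
  rw [Set.mem_singleton_iff.mp (hJ hx)]
  simp

theorem monomial_one_mem_of_X_pow_mem [Fintype σ] [Nonempty σ] [CommSemiring R]
    {J : Ideal (MvPolynomial σ R)} {N : σ → ℕ} (hN : ∀ i, X i ^ N i ∈ J) {m : σ →₀ ℕ}
    (hm : ∑ i, N i ≤ m.degree) : monomial m 1 ∈ J := by
  obtain ⟨i, hi⟩ : ∃ i, N i ≤ m i := by
    by_contra! h
    have := Finset.sum_lt_sum_of_nonempty Finset.univ_nonempty fun i _ => h i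
    rw [← Finsupp.degree_eq_sum] at this
    omega
  have hsplit : monomial m (1 : R) = monomial (m - Finsupp.single i (N i)) 1 * X i ^ N i := by
    rw [X_pow_eq_monomial, monomial_mul, mul_one, tsub_add_cancel_of_le]
    exact Finsupp.single_le_iff.mpr hi
  rw [hsplit]
  exact Ideal.mul_mem_left _ _ (hN i)

section SpanOfCoefficients

variable {L ι : Type*} [Field L] [Fintype ι] {G : ι → MvPolynomial σ L} {d : ι → ℕ}
  {δ : ℕ} {S : Finset (σ →₀ ℕ)}

/-- The coefficient vectors, restricted to `S`, of the products `x^m' * G k` of degree `δ`. -/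
noncomputable def coeffVectorsOfDegree (G : ι → MvPolynomial σ L) (d : ι → ℕ) (δ : ℕ)
    (S : Finset (σ →₀ ℕ)) :
    (Σ k, {m' : σ →₀ ℕ // m'.degree + d k = δ}) → S → L :=
  fun q m => coeff m.1 (monomial q.2.1 1 * G q.1)

theorem coeff_mem_span_coeffVectorsOfDegree (hG : ∀ k, (G k).IsHomogeneous (d k))
    (hS : ∀ m ∈ S, m.degree = δ) {p : MvPolynomial σ L} (hp : p ∈ Ideal.span (Set.range G)) :
    (fun m : S => coeff m.1 p) ∈ Submodule.span L (Set.range (coeffVectorsOfDegree G d δ S)) := by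
  set W := Submodule.span L (Set.range (coeffVectorsOfDegree G d δ S))
  let coeffs : MvPolynomial σ L →ₗ[L] S → L := LinearMap.pi fun m => lcoeff L m.1
  change p ∈ W.comap coeffs
  obtain ⟨c, rfl⟩ := Ideal.mem_span_range_iff_exists_fun.mp hp
  refine Submodule.sum_mem _ fun k _ => ?_
  induction c k using MvPolynomial.induction_on' with
  | monomial m' a =>
    have hsmul : monomial m' a * G k = a • (monomial m' 1 * G k) := by
      rw [smul_eq_C_mul, ← mul_assoc, C_mul_monomial, mul_one]
    rw [hsmul]
    refine Submodule.smul_mem _ a ?_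
    by_cases hdeg : m'.degree + d k = δ
    · exact Submodule.subset_span ⟨⟨k, m', hdeg⟩, rfl⟩
    · have hz : coeffs (monomial m' 1 * G k) = 0 := by
        ext m
        exact ((isHomogeneous_monomial 1 rfl).mul (hG k)).coeff_eq_zero
          (by rw [hS m m.2]; exact Ne.symm hdeg)
      simp [hz]
  | add p q hp hq => rw [add_mul]; exact Submodule.add_mem _ hp hq

theorem span_coeffVectorsOfDegree_eq_top (hG : ∀ k, (G k).IsHomogeneous (d k))
    (hS : ∀ m ∈ S, m.degree = δ) (hmon : ∀ m ∈ S, monomial m 1 ∈ Ideal.span (Set.range G)) :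
    Submodule.span L (Set.range (coeffVectorsOfDegree G d δ S)) = ⊤ := by
  classical
  rw [eq_top_iff, ← (Pi.basisFun L S).span_eq, Submodule.span_le]
  rintro _ ⟨m, rfl⟩
  rw [SetLike.mem_coe]
  convert coeff_mem_span_coeffVectorsOfDegree hG hS (hmon m.1 m.2) using 1
  ext m₂
  simp only [Pi.basisFun_apply, Pi.single_apply, coeff_monomial, Subtype.ext_iff, eq_comm]

end SpanOfCoefficients

theorem exists_map_ne_zero_and_C_mul_monomial_mem [Fintype σ] [DecidableEq σ] [CommRing R]
    {L ι : Type*} [Field L] [Fintype ι] (f : R →+* L) {G : ι → MvPolynomial σ R} {d : ι → ℕ}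
    (hG : ∀ k, (G k).IsHomogeneous (d k)) {δ : ℕ}
    (hmon : ∀ m : σ →₀ ℕ, m.degree = δ →
      monomial m 1 ∈ Ideal.span (Set.range fun k => map f (G k))) :
    ∃ D : R, f D ≠ 0 ∧
      ∀ e : σ →₀ ℕ, e.degree = δ → C D * monomial e 1 ∈ Ideal.span (Set.range G) := by
  set S := Finset.finsuppAntidiag (Finset.univ : Finset σ) δ
  have hS : ∀ m ∈ S, m.degree = δ := fun m hm => Finset.mem_finsuppAntidiag_univ.mp hm
  have hspan := span_coeffVectorsOfDegree_eq_top (fun k => (hG k).map f) hS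
    fun m hm => hmon m (hS m hm)
  obtain ⟨u, hu⟩ := Matrix.exists_det_ne_zero_of_span_eq_top hspan
  let g : S → MvPolynomial σ R := fun q => monomial (u q).2.1 1 * G (u q).1
  set M := Matrix.of fun m q : S => coeff m.1 (g q)
  have hfM : f.mapMatrix M =
      Matrix.of fun m q => coeffVectorsOfDegree (fun k => map f (G k)) d δ S (u q) m := by
    ext m q
    simp only [RingHom.mapMatrix_apply, Matrix.map_apply, Matrix.of_apply, M, g,
      coeffVectorsOfDegree]
    rw [← coeff_map, map_mul, map_monomial, map_one]
  have hgS : ∀ q, (g q).support ⊆ S := by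
    intro q m hm
    have hhom : (g q).IsHomogeneous δ := by
      rw [← (u q).2.2]
      exact (isHomogeneous_monomial 1 rfl).mul (hG (u q).1)
    exact Finset.mem_finsuppAntidiag_univ.mpr
      (by_contra fun hdeg => mem_support_iff.mp hm (hhom.coeff_eq_zero hdeg))
  have hgI : ∀ q, g q ∈ Ideal.span (Set.range G) := fun q =>
    Ideal.mul_mem_left _ _ (Ideal.subset_span ⟨(u q).1, rfl⟩)
  refine ⟨M.det, by rwa [RingHom.map_det, hfM], fun e he => ?_⟩
  exact C_det_mul_monomial_mem g hgI hgS ⟨e, Finset.mem_finsuppAntidiag_univ.mpr he⟩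

end MvPolynomial

theorem genericHom_isHomogeneous (n r : ℕ) (d : Fin r → ℕ) (i : Fin r) :
    (genericHom n r d i).IsHomogeneous (d i) :=
  IsHomogeneous.sum _ _ _ fun m _ =>
    isHomogeneous_monomial _ (Finset.mem_finsuppAntidiag_univ.mp m.2)

def finsuppAntidiagPermute {n : ℕ} (π : Equiv.Perm (Fin n)) (δ : ℕ) :
    Equiv.Perm {m : Fin n →₀ ℕ // m ∈ Finset.finsuppAntidiag Finset.univ δ} :=
  (Finsupp.equivCongrLeft π).subtypeEquiv fun m => by
    rw [Finset.mem_finsuppAntidiag_univ, Finset.mem_finsuppAntidiag_univ,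
      Finsupp.equivCongrLeft_apply, Finsupp.degree_equivMapDomain]

/-- The relabelling `a_{k,m} ↦ a_{k,π m}` of the coefficients. -/
def CoeffIdx.permute {n r : ℕ} {d : Fin r → ℕ} (π : Equiv.Perm (Fin n)) :
    Equiv.Perm (CoeffIdx n r d) :=
  Equiv.sigmaCongrRight fun k => finsuppAntidiagPermute π (d k)

theorem CoeffIdx.permute_symm {n r : ℕ} {d : Fin r → ℕ} (π : Equiv.Perm (Fin n)) :
    (CoeffIdx.permute (d := d) π).symm = CoeffIdx.permute π.symm :=
  rfl

section Symmetry

variable {n r : ℕ} {d : Fin r → ℕ}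

noncomputable def permuteVars (π : Equiv.Perm (Fin n)) :
    MvPolynomial (Fin n) (MvPolynomial (CoeffIdx n r d) ℤ) →+*
      MvPolynomial (Fin n) (MvPolynomial (CoeffIdx n r d) ℤ) :=
  (rename π).toRingHom.comp (map (rename (CoeffIdx.permute π)).toRingHom)

theorem permuteVars_genericHom (π : Equiv.Perm (Fin n)) (k : Fin r) :
    permuteVars π (genericHom n r d k) = genericHom n r d k := by
  simp only [genericHom, map_sum, ← Finset.univ_eq_attach]
  refine Fintype.sum_equiv (finsuppAntidiagPermute π (d k)) _ _ fun m => ?_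
  simp only [permuteVars, RingHom.comp_apply, AlgHom.toRingHom_eq_coe, RingHom.coe_coe,
    map_monomial, rename_monomial, ← Finsupp.equivMapDomain_eq_mapDomain]
  exact congrArg (monomial _) (rename_X _ _)

theorem X_pow_mul_C_rename_permute_mem (π : Equiv.Perm (Fin n)) {i : Fin n} {τ : ℕ}
    {T : MvPolynomial (CoeffIdx n r d) ℤ}
    (h : X i ^ τ * C T ∈ Ideal.span (Set.range (genericHom n r d))) :
    X (π i) ^ τ * C (rename (CoeffIdx.permute π) T) ∈
      Ideal.span (Set.range (genericHom n r d)) := by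
  have h' := Ideal.mem_map_of_mem (permuteVars π) h
  rw [Ideal.map_span, ← Set.range_comp,
    show permuteVars π ∘ genericHom n r d = genericHom n r d from
      funext (permuteVars_genericHom π)] at h'
  simpa [permuteVars] using h'

end Symmetry

theorem exists_X_pow_mul_C_mem_of_inertiaForms_eq_span {n : ℕ} {d : Fin n → ℕ}
    {R : MvPolynomial (CoeffIdx n n d) ℤ} (hR : ∀ T, IsInertiaForm n n d T ↔ T ∈ Ideal.span {R})
    (j : Fin n) : ∃ τ, X j ^ τ * C R ∈ Ideal.span (Set.range (genericHom n n d)) := by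
  obtain ⟨i, τ, h⟩ := (hR R).2 (Ideal.mem_span_singleton_self R)
  set ρ := renameEquiv ℤ (CoeffIdx.permute (d := d) (Equiv.swap i j))
  have hρ : ρ.symm = ρ := by
    rw [renameEquiv_symm, CoeffIdx.permute_symm, Equiv.symm_swap]
  have hρR : X j ^ τ * C (ρ R) ∈ Ideal.span (Set.range (genericHom n n d)) := by
    simpa [ρ] using X_pow_mul_C_rename_permute_mem (Equiv.swap i j) h
  obtain ⟨c, hc⟩ := Ideal.mem_span_singleton.mp ((hR (ρ R)).1 ⟨j, τ, hρR⟩)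
  -- `ρ` is an involution, so `R = ρ (ρ R) = ρ R * ρ c` is again a multiple of `ρ R`.
  have hR_eq : R = ρ R * ρ c := by
    have := ρ.symm_apply_apply R
    rwa [hρ, hc, map_mul, eq_comm] at this
  refine ⟨τ, ?_⟩
  rw [hR_eq, C_mul, ← mul_assoc]
  exact Ideal.mul_mem_right _ _ hρR

theorem map_eq_zero_of_nontrivial_zero {n : ℕ} {d : Fin n → ℕ}
    {R : MvPolynomial (CoeffIdx n n d) ℤ} (hR : ∀ T, IsInertiaForm n n d T ↔ T ∈ Ideal.span {R})
    {L : Type*} [CommRing L] [IsDomain L] (ψ : MvPolynomial (CoeffIdx n n d) ℤ →+* L)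
    {x : Fin n → L} (hx : x ≠ 0) (hzero : ∀ i, eval x (map ψ (genericHom n n d i)) = 0) :
    ψ R = 0 := by
  obtain ⟨j, hj⟩ := Function.ne_iff.mp hx
  obtain ⟨τ, hτ⟩ := exists_X_pow_mul_C_mem_of_inertiaForms_eq_span hR j
  have hker : Ideal.span (Set.range (genericHom n n d)) ≤ RingHom.ker ((eval x).comp (map ψ)) :=
    Ideal.span_le.mpr (Set.range_subset_iff.mpr hzero)
  have hxR : x j ^ τ * ψ R = 0 := by simpa using hker hτ
  exact (mul_eq_zero.mp hxR).resolve_left (pow_ne_zero _ hj)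

theorem map_ne_zero_of_not_exists_nontrivial_zero {n : ℕ} {d : Fin n → ℕ}
    {R : MvPolynomial (CoeffIdx n n d) ℤ} (hR : ∀ T, IsInertiaForm n n d T ↔ T ∈ Ideal.span {R})
    {L : Type*} [Field L] [IsAlgClosed L] (ψ : MvPolynomial (CoeffIdx n n d) ℤ →+* L)
    (hnone : ¬∃ x : Fin n → L, x ≠ 0 ∧ ∀ i, eval x (map ψ (genericHom n n d i)) = 0) :
    ψ R ≠ 0 := by
  obtain ⟨i₀, -⟩ := (hR R).2 (Ideal.mem_span_singleton_self R)
  have : Nonempty (Fin n) := ⟨i₀⟩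
  have hpow : ∀ i, ∃ N, X i ^ N ∈ Ideal.span (Set.range fun k => map ψ (genericHom n n d k)) :=
    exists_X_pow_mem_of_zeroLocus_subset fun x hx => by_contra fun hx0 =>
      hnone ⟨x, hx0, fun k => hx _ (Ideal.subset_span ⟨k, rfl⟩)⟩
  choose N hN using hpow
  obtain ⟨D, hD, hDmem⟩ := exists_map_ne_zero_and_C_mul_monomial_mem ψ
    (genericHom_isHomogeneous n n d) fun m hm => monomial_one_mem_of_X_pow_mem hN hm.ge
  have hinertia : IsInertiaForm n n d D := by
    refine ⟨i₀, ∑ i, N i, ?_⟩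
    rw [X_pow_eq_monomial, mul_comm]
    exact hDmem _ (Finsupp.degree_single _ _)
  obtain ⟨c, rfl⟩ := Ideal.mem_span_singleton.mp ((hR D).1 hinertia)
  exact left_ne_zero_of_mul (by rwa [map_mul] at hD)

theorem map_eq_zero_iff_exists_nontrivial_zero {n : ℕ} {d : Fin n → ℕ}
    {R : MvPolynomial (CoeffIdx n n d) ℤ} (hR : ∀ T, IsInertiaForm n n d T ↔ T ∈ Ideal.span {R})
    {L : Type*} [Field L] [IsAlgClosed L] (ψ : MvPolynomial (CoeffIdx n n d) ℤ →+* L) :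
    ψ R = 0 ↔ ∃ x : Fin n → L, x ≠ 0 ∧ ∀ i, eval x (map ψ (genericHom n n d i)) = 0 :=
  ⟨fun hψR => by_contra fun hnone => map_ne_zero_of_not_exists_nontrivial_zero hR ψ hnone hψR,
    fun ⟨_, hx, hzero⟩ => map_eq_zero_of_nontrivial_zero hR ψ hx hzero⟩

theorem resultant_vanishes_iff_nontrivial_zero_general (n : ℕ) (d : Fin n → ℕ)
    (R : MvPolynomial (CoeffIdx n n d) ℤ)
    (hR : ∀ T, IsInertiaForm n n d T ↔ T ∈ Ideal.span {R})
    {K : Type*} [Field K] (φ : MvPolynomial (CoeffIdx n n d) ℤ →+* K) :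
    φ R = 0 ↔
      ∃ x : Fin n → AlgebraicClosure K, x ≠ 0 ∧
        ∀ i, aeval x (map φ (genericHom n n d i)) = 0 := by
  set ψ := (algebraMap K (AlgebraicClosure K)).comp φ
  have haeval : ∀ (x : Fin n → AlgebraicClosure K) p,
      aeval x (map φ p) = eval x (map ψ p) := fun x p => by
    rw [aeval_def, eval₂_eq_eval_map, map_map]
  have hφψ : φ R = 0 ↔ ψ R = 0 := (map_eq_zero_iff _ (algebraMap K _).injective).symm
  simp only [haeval, hφψ]
  exact map_eq_zero_iff_exists_nontrivial_zero hR ψ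

/-- let `R` generate the (principal) ideal of inertia forms of `n`
generic homogeneous polynomials in `n` variables of positive degrees, and let
`φ : ℤ[A] → K` be a specialization of the coefficients in a field `K`. Then
`φ(R) = 0` iff the specialized system `φ(F 0) = 0, …, φ(F (n-1)) = 0` has a
non-trivial zero in the algebraic closure of `K`. -/
theorem resultant_vanishes_iff_nontrivial_zero (n : ℕ) (d : Fin n → ℕ)
    (hd : ∀ i, 0 < d i) (R : MvPolynomial (CoeffIdx n n d) ℤ)
    (hR : ∀ T, IsInertiaForm n n d T ↔ T ∈ Ideal.span {R})
    {K : Type*} [Field K] (φ : MvPolynomial (CoeffIdx n n d) ℤ →+* K) :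
    φ R = 0 ↔
      ∃ x : Fin n → AlgebraicClosure K, x ≠ 0 ∧
        ∀ i, aeval x (map φ (genericHom n n d i)) = 0 :=
  resultant_vanishes_iff_nontrivial_zero_general n d R hR φ
end

section
/- Let σ : ℝ → ℝ → Prop satisfy: (i) for all a, c ∈ ℝ with c > 0, σ(a, 0) ↔ σ(a·c, 0), and (ii) for all a, c ∈ ℝ with c < 0, σ(a, 0) ↔ σ(0, a·c). Let f, g ∈ ℝ[x₁,…,x_s, y] be polynomials with f/g in minimal terms (i.e. f and g have no common zero), and fix x⃗ ∈ ℝ^s. Then: ( ∃ y ∈ ℝ, g(x⃗,y) ≠ 0 ∧ σ( f(x⃗,y)/g(x⃗,y), 0 ) ) ↔ ( ∃ y ∈ ℝ, ( g(x⃗,y) > 0 ∧ σ( f(x⃗,y), 0 ) ) ∨ ( g(x⃗,y) < 0 ∧ σ( 0, f(x⃗,y) ) ) ). -/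
open MvPolynomial

/-- for a relation `σ` abstracting one of `{=, ≠, >, <, ≤, ≥}`, and
`f/g` in minimal terms, the existential statement about the rational function
(on its domain) is equivalent to the sign-split polynomial statement. -/
theorem exists_rational_sigma_iff_sign_split (σ : ℝ → ℝ → Prop)
    (hpos : ∀ a c : ℝ, 0 < c → (σ a 0 ↔ σ (a * c) 0))
    (hneg : ∀ a c : ℝ, c < 0 → (σ a 0 ↔ σ 0 (a * c)))
    (s : ℕ) (f g : MvPolynomial (Fin (s + 1)) ℝ)
    (hmin : ∀ v : Fin (s + 1) → ℝ, ¬ (eval v f = 0 ∧ eval v g = 0))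
    (x : Fin s → ℝ) :
    (∃ y : ℝ, eval (Fin.snoc x y) g ≠ 0 ∧
        σ (eval (Fin.snoc x y) f / eval (Fin.snoc x y) g) 0) ↔
    (∃ y : ℝ, (0 < eval (Fin.snoc x y) g ∧ σ (eval (Fin.snoc x y) f) 0) ∨
        (eval (Fin.snoc x y) g < 0 ∧ σ 0 (eval (Fin.snoc x y) f))) := by
  constructor
  · rintro ⟨y, hg, hs⟩
    refine ⟨y, ?_⟩
    rcases hg.lt_or_gt with h | h
    · right
      refine ⟨h, ?_⟩
      have := (hneg (eval (Fin.snoc x y) f / eval (Fin.snoc x y) g)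
        (eval (Fin.snoc x y) g) h).mp hs
      rwa [div_mul_cancel₀ _ (ne_of_lt h)] at this
    · left
      refine ⟨h, ?_⟩
      have := (hpos (eval (Fin.snoc x y) f / eval (Fin.snoc x y) g)
        (eval (Fin.snoc x y) g) h).mp hs
      rwa [div_mul_cancel₀ _ (ne_of_gt h)] at this
  · rintro ⟨y, ⟨h, hs⟩ | ⟨h, hs⟩⟩
    · refine ⟨y, ne_of_gt h, ?_⟩
      have := (hpos (eval (Fin.snoc x y) f / eval (Fin.snoc x y) g)
        (eval (Fin.snoc x y) g) h)
      rw [div_mul_cancel₀ _ (ne_of_gt h)] at this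
      exact this.mpr hs
    · refine ⟨y, ne_of_lt h, ?_⟩
      have := (hneg (eval (Fin.snoc x y) f / eval (Fin.snoc x y) g)
        (eval (Fin.snoc x y) g) h)
      rw [div_mul_cancel₀ _ (ne_of_lt h)] at this
      exact this.mpr hs
end

section
/- Let σ : ℝ → ℝ → Prop satisfy: (i) for all a, c ∈ ℝ with c > 0, σ(a, 0) ↔ σ(a·c, 0), and (ii) for all a, c ∈ ℝ with c < 0, σ(a, 0) ↔ σ(0, a·c). Let f, g ∈ ℝ[x₁,…,x_s, y] be polynomials with f/g in minimal terms (i.e. f and g have no common zero), and fix x⃗ ∈ ℝ^s. Then: ( ∀ y ∈ ℝ, g(x⃗,y) = 0 ∨ σ( f(x⃗,y)/g(x⃗,y), 0 ) ) ↔ ( ∀ y ∈ ℝ, g(x⃗,y) = 0 ∨ σ( f(x⃗,y)·g(x⃗,y), 0 ) ). -/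
open MvPolynomial

/-- for a relation `σ` abstracting one of `{=, ≠, >, <, ≤, ≥}`, and
`f/g` in minimal terms, the universal statement about the rational function
(on its domain) is equivalent to the one with the denominator multiplied up. -/
theorem forall_rational_sigma_iff_mul (σ : ℝ → ℝ → Prop)
    (hpos : ∀ a c : ℝ, 0 < c → (σ a 0 ↔ σ (a * c) 0))
    (hneg : ∀ a c : ℝ, c < 0 → (σ a 0 ↔ σ 0 (a * c)))
    (s : ℕ) (f g : MvPolynomial (Fin (s + 1)) ℝ)
    (hmin : ∀ v : Fin (s + 1) → ℝ, ¬ (eval v f = 0 ∧ eval v g = 0))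
    (x : Fin s → ℝ) :
    (∀ y : ℝ, eval (Fin.snoc x y) g = 0 ∨
        σ (eval (Fin.snoc x y) f / eval (Fin.snoc x y) g) 0) ↔
    (∀ y : ℝ, eval (Fin.snoc x y) g = 0 ∨
        σ (eval (Fin.snoc x y) f * eval (Fin.snoc x y) g) 0) := by
  have key : ∀ y : ℝ, eval (Fin.snoc x y) g ≠ 0 →
      (σ (eval (Fin.snoc x y) f / eval (Fin.snoc x y) g) 0 ↔
       σ (eval (Fin.snoc x y) f * eval (Fin.snoc x y) g) 0) := by
    intro y hg
    set F := eval (Fin.snoc x y) f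
    set G := eval (Fin.snoc x y) g
    have hG2 : 0 < G * G := mul_self_pos.mpr hg
    have := hpos (F / G) (G * G) hG2
    rwa [div_mul_eq_mul_div, mul_div_assoc, mul_div_assoc, div_self hg, mul_one] at this
  constructor <;> intro h y <;> rcases h y with h0 | h1
  · exact Or.inl h0
  · by_cases hg : eval (Fin.snoc x y) g = 0
    · exact Or.inl hg
    · exact Or.inr ((key y hg).1 h1)
  · exact Or.inl h0
  · by_cases hg : eval (Fin.snoc x y) g = 0
    · exact Or.inl hg
    · exact Or.inr ((key y hg).2 h1)
end

section
/- Let f = y² + z² + x + z − 1, g = −x² + y² + z² − 1, and h = x² + y + z, regarded as polynomials in ℂ[x, y, z]. Then { x ∈ ℂ : ∃ y, z ∈ ℂ, f(x,y,z) = 0 ∧ g(x,y,z) = 0 ∧ h(x,y,z) = 0 } = { x ∈ ℂ : (x² + x + 1)·(x² + x − 1) = 0 }. -/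
open MvPolynomial

/-- the projection onto the `x`-coordinate of the complex variety of
`f = y² + z² + x + z − 1`, `g = −x² + y² + z² − 1`, `h = x² + y + z` is the zero set
of `(x² + x + 1)(x² + x − 1)`. -/
theorem projection_of_variety_eq_genuine_roots :
    {x : ℂ | ∃ y z : ℂ,
        eval ![x, y, z] ((X 1 : MvPolynomial (Fin 3) ℂ) ^ 2 + X 2 ^ 2 + X 0 + X 2 - 1) = 0 ∧
        eval ![x, y, z] (-(X 0 : MvPolynomial (Fin 3) ℂ) ^ 2 + X 1 ^ 2 + X 2 ^ 2 - 1) = 0 ∧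
        eval ![x, y, z] ((X 0 : MvPolynomial (Fin 3) ℂ) ^ 2 + X 1 + X 2) = 0} =
    {x : ℂ | (x ^ 2 + x + 1) * (x ^ 2 + x - 1) = 0} := by
  ext x
  simp only [Set.mem_setOf_eq, map_add, map_sub, map_neg, map_pow, map_one, eval_X,
    Matrix.cons_val_zero, Matrix.cons_val_one, Matrix.head_cons, Matrix.cons_val_two,
    Matrix.tail_cons]
  constructor
  · rintro ⟨y, z, hf, hg, hh⟩
    linear_combination ((x + y) + (x ^ 2 + x - z)) * hf +
      (1 - (x + y) - (x ^ 2 + x - z)) * hg + (-(x + y)) * hh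
  · intro h
    refine ⟨x, -(x ^ 2 + x), ?_, ?_, ?_⟩
    · linear_combination h
    · linear_combination h
    · ring
end
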